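/- Let N ≥ 2 be an integer that is not prime, and let p be a prime number dividing N. If p ∈ {53, 157, 443, 467, 677}, then N is monomially reducible. -/

import Mathlib

/-!
Write `K j` for the continuant `K_j(k, …, k)`, so that `mat k ^ (j + 1)` has entries
`K (j + 1), -K j, K j, K (j + 1) - k K j`. If `K (i + 1) = ±1` and `β = K (i + 1) * K i`, then
`(β, k, …, k, β)` with `i + 1` copies of `k` is a solution, and every constant tuple `(k, …, k)`
of size `n ≥ i + 4` equals `(k - β, k, …, k, k - β) ⊕ (β, k, …, k, β)`. So the `k`-monomial
minimal solution is reducible as soon as `K j ≠ 0` for all `j ≤ i + 2`.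

If `p² ∣ N`, take `k = N / p`: then `k² = 0` and `K 0, …, K 3 = 1, k, -1, -2k`. Otherwise
`N = p m` with `p ∤ m`, `m ≥ 2`, and we take `k ≡ s (mod p)`, `k ≡ 1 (mod m)`. Modulo `m` the
continuants of `1` run through `1, 1, 0, -1, -1, 0` periodically, so there `K 13 = 1` and `K j`
vanishes only for `j ≡ 2 (mod 3)`; the residue `s` is chosen with `K_13(s) = 1` and `K_j(s) ≠ 0`
for `j = 2, 5, 8, 11, 14`, and `i = 12` works.
-/

namespace Monomial

/-- The elementary matrix `[[a, -1], [1, 0]]` over `ZMod N`. -/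
def mat {N : ℕ} (a : ZMod N) : Matrix (Fin 2) (Fin 2) (ZMod N) := !![a, -1; 1, 0]

/-- `M [a₁, …, aₙ] = mat aₙ * ⋯ * mat a₁`. -/
def M {N : ℕ} (l : List (ZMod N)) : Matrix (Fin 2) (Fin 2) (ZMod N) :=
  (l.reverse.map mat).prod

/-- A tuple is a solution of (E_N) if the associated matrix is `±Id`. -/
def IsSolution {N : ℕ} (l : List (ZMod N)) : Prop := M l = 1 ∨ M l = -1

/-- The sum `(a₁,…,aₙ) ⊕ (b₁,…,bₘ) = (a₁+bₘ, a₂,…,aₙ₋₁, aₙ+b₁, b₂,…,bₘ₋₁)`. -/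
def osum {N : ℕ} (u v : List (ZMod N)) : List (ZMod N) :=
  (u.headI + v.getLastD 0) ::
    ((u.drop 1).dropLast ++ (u.getLastD 0 + v.headI) :: (v.drop 1).dropLast)

/-- Equivalence: `v` is a cyclic permutation of `u` or of the reversal of `u`. -/
def CyclicEquiv {N : ℕ} (u v : List (ZMod N)) : Prop :=
  (∃ i, v = u.rotate i) ∨ (∃ i, v = u.reverse.rotate i)

/-- A tuple is reducible if, up to equivalence, it is a sum of an `m`-tuple (`m ≥ 3`)
with a solution of size `l ≥ 3`. -/
def Reducible {N : ℕ} (c : List (ZMod N)) : Prop :=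
  ∃ a b : List (ZMod N), 3 ≤ a.length ∧ 3 ≤ b.length ∧ IsSolution b ∧
    CyclicEquiv c (osum a b)

/-- An irreducible solution: a solution which is not reducible (and `(0,0)` is
not considered irreducible). -/
def IrreducibleSol {N : ℕ} (c : List (ZMod N)) : Prop :=
  IsSolution c ∧ ¬ Reducible c ∧ c ≠ [0, 0]

/-- The size of the `k`-monomial minimal solution of (E_N): the least `n > 0` such
that the constant `n`-tuple `(k, …, k)` is a solution. -/
noncomputable def monomialMinimalSize (N : ℕ) (k : ZMod N) : ℕ :=
  sInf {n | 0 < n ∧ IsSolution (List.replicate n k)}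

/-- `N` is monomially irreducible if, for every `k ≠ 0`, the `k`-monomial minimal
solution of (E_N) is irreducible. -/
def MonomiallyIrreducible (N : ℕ) : Prop :=
  ∀ k : ZMod N, k ≠ 0 → IrreducibleSol (List.replicate (monomialMinimalSize N k) k)

/-- The continuant `Kₙ(x, …, x)` at a constant tuple: `K₀ = 1`, `K₁ = x`,
`Kₙ₊₂ = x * Kₙ₊₁ - Kₙ`. -/
def K {N : ℕ} (x : ZMod N) : ℕ → ZMod N
  | 0 => 1
  | 1 => x
  | n + 2 => x * K x (n + 1) - K x n

variable {N : ℕ}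
section

variable {N : ℕ}

lemma K_add_two (x : ZMod N) (n : ℕ) : K x (n + 2) = x * K x (n + 1) - K x n := rfl

lemma map_K {q : ℕ} (f : ZMod N →+* ZMod q) (x : ZMod N) : ∀ n, f (K x n) = K (f x) n
  | 0 => map_one f
  | 1 => rfl
  | n + 2 => by rw [K_add_two, map_sub, map_mul, map_K f x (n + 1), map_K f x n, K_add_two]

lemma mat_pow_succ (x : ZMod N) (n : ℕ) :
    mat x ^ (n + 1) = !![K x (n + 1), -K x n; K x n, K x (n + 1) - x * K x n] := by
  induction n with
  | zero => simp [mat, K]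
  | succ n ih =>
    rw [pow_succ', ih, mat, K_add_two]
    ext i j
    fin_cases i <;> fin_cases j <;> simp [Matrix.mul_apply, Fin.sum_univ_two] <;> ring

lemma det_mat (x : ZMod N) : (mat x).det = 1 := by
  simp [mat, Matrix.det_fin_two_of]

lemma M_replicate (x : ZMod N) (n : ℕ) : M (List.replicate n x) = mat x ^ n := by
  simp [M, List.map_replicate, List.prod_replicate]

lemma isSolution_replicate_succ_iff (x : ZMod N) (n : ℕ) :
    IsSolution (List.replicate (n + 1) x) ↔
      K x n = 0 ∧ (K x (n + 1) = 1 ∨ K x (n + 1) = -1) := by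
  rw [IsSolution, M_replicate, mat_pow_succ, ← Matrix.ext_iff, ← Matrix.ext_iff]
  simp only [Matrix.of_apply, Matrix.cons_val', Matrix.cons_val_fin_one, Matrix.one_fin_two,
    Fin.forall_fin_two, Fin.isValue, Matrix.cons_val_zero, Matrix.cons_val_one, neg_eq_zero,
    Matrix.neg_apply, neg_zero]
  constructor
  · rintro (⟨⟨h1, h0⟩, -⟩ | ⟨⟨h1, h0⟩, -⟩) <;> simp [h0, h1]
  · rintro ⟨h0, h1 | h1⟩ <;> simp [h0, h1]

lemma exists_isSolution_replicate [NeZero N] (x : ZMod N) :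
    ∃ n, 0 < n ∧ IsSolution (List.replicate n x) := by
  let g : Matrix.SpecialLinearGroup (Fin 2) (ZMod N) := ⟨mat x, det_mat x⟩
  refine ⟨orderOf g, (isOfFinOrder_of_finite g).orderOf_pos, Or.inl ?_⟩
  rw [M_replicate]
  exact congrArg Subtype.val (pow_orderOf_eq_one g)

lemma osum_replicate (x y : ZMod N) (a b : ℕ) :
    osum ((x - y) :: List.replicate a x ++ [x - y]) (y :: List.replicate b x ++ [y]) =
      List.replicate (a + b + 2) x := by
  rw [osum, List.getLastD_concat, List.getLastD_concat]
  simp only [List.cons_append, List.headI_cons, List.drop_succ_cons, List.drop_zero,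
    List.dropLast_concat, sub_add_cancel]
  rw [← List.replicate_succ, List.replicate_append_replicate, ← List.replicate_succ]
  congr 1

lemma isSolution_cons_replicate_concat (x : ZMod N) (i : ℕ)
    (hσ : K x (i + 1) = 1 ∨ K x (i + 1) = -1) :
    IsSolution ((K x (i + 1) * K x i) :: List.replicate (i + 1) x ++ [K x (i + 1) * K x i]) := by
  have hpow := mat_pow_succ x i
  have hdet : (mat x ^ (i + 1)).det = 1 := by rw [Matrix.det_pow, det_mat, one_pow]
  rw [hpow, Matrix.det_fin_two_of] at hdet
  set σ := K x (i + 1)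
  set c := K x i
  have hσσ : σ * σ = 1 := by rcases hσ with h | h <;> rw [h] <;> ring
  have hM : M ((σ * c) :: List.replicate (i + 1) x ++ [σ * c]) = !![-σ, 0; 0, -σ] := by
    simp only [M, List.reverse_append, List.reverse_cons, List.reverse_replicate, List.map_append,
      List.map_cons, List.map_replicate, List.prod_append, List.prod_cons, List.prod_replicate]
    rw [hpow, mat]
    ext a b
    fin_cases a <;> fin_cases b <;> simp [Matrix.mul_apply, Fin.sum_univ_two]
    · linear_combination (σ * c * c - x * c + σ) * hσσ - σ * hdet
    · linear_combination -c * hσσ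
    · linear_combination c * hσσ
  rcases hσ with h | h
  · right; rw [hM, h, Matrix.one_fin_two]; simp
  · left; rw [hM, h, Matrix.one_fin_two]; simp

lemma reducible_replicate (x : ZMod N) {i n : ℕ} (hσ : K x (i + 1) = 1 ∨ K x (i + 1) = -1)
    (hn : i + 4 ≤ n) : Reducible (List.replicate n x) := by
  set β := K x (i + 1) * K x i
  refine ⟨(x - β) :: List.replicate (n - i - 3) x ++ [x - β],
    β :: List.replicate (i + 1) x ++ [β], by simp; omega, by simp,
    isSolution_cons_replicate_concat x i hσ, Or.inl ⟨0, ?_⟩⟩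
  rw [List.rotate_zero, osum_replicate]
  congr 1
  omega

lemma monomialMinimalSize_spec [NeZero N] (x : ZMod N) :
    0 < monomialMinimalSize N x ∧ IsSolution (List.replicate (monomialMinimalSize N x) x) :=
  Nat.sInf_mem (exists_isSolution_replicate x)

lemma le_monomialMinimalSize [NeZero N] {x : ZMod N} {d : ℕ} (h : ∀ j ≤ d, K x j ≠ 0) :
    d + 2 ≤ monomialMinimalSize N x := by
  obtain ⟨hpos, hsol⟩ := monomialMinimalSize_spec x
  obtain ⟨n, hn⟩ := Nat.exists_eq_add_one_of_ne_zero hpos.ne'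
  rw [hn, isSolution_replicate_succ_iff] at hsol
  by_contra hlt
  exact h n (by omega) hsol.1

theorem not_monomiallyIrreducible_of_K_eq_one_or_neg_one [NeZero N] {x : ZMod N} (hx : x ≠ 0)
    (i : ℕ) (hσ : K x (i + 1) = 1 ∨ K x (i + 1) = -1) (hK : ∀ j ≤ i + 2, K x j ≠ 0) :
    ¬ MonomiallyIrreducible N := fun hirr =>
  (hirr x hx).2.1 (reducible_replicate x hσ (le_monomialMinimalSize hK))

lemma K_one_add_three (n : ℕ) : K (1 : ZMod N) (n + 3) = -K 1 n := by
  rw [K_add_two, K_add_two]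
  ring

lemma K_one_three_mul_add (q r : ℕ) : K (1 : ZMod N) (3 * q + r) = (-1) ^ q * K 1 r := by
  induction q with
  | zero => simp
  | succ q ih => rw [show 3 * (q + 1) + r = 3 * q + r + 3 by ring, K_one_add_three, ih]; ring

lemma K_one_ne_zero [Nontrivial (ZMod N)] {j : ℕ} (hj : j % 3 ≠ 2) :
    K (1 : ZMod N) j ≠ 0 := by
  rw [← Nat.div_add_mod j 3, K_one_three_mul_add]
  obtain h | h : j % 3 = 0 ∨ j % 3 = 1 := by omega
  all_goals rw [h]; rcases neg_one_pow_eq_or (ZMod N) (j / 3) with hq | hq <;> simp [hq, K]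

theorem not_monomiallyIrreducible_of_sq_dvd [NeZero N] {p : ℕ} (hp : 3 ≤ p) (hdvd : p ^ 2 ∣ N) :
    ¬ MonomiallyIrreducible N := by
  obtain ⟨r, rfl⟩ := hdvd
  have hr : r ≠ 0 := by rintro rfl; exact NeZero.ne (p ^ 2 * 0) rfl
  have : Fact (1 < p ^ 2 * r) := ⟨by nlinarith [Nat.one_le_iff_ne_zero.2 hr]⟩
  set x : ZMod (p ^ 2 * r) := ((p * r : ℕ) : ZMod (p ^ 2 * r))
  have hxx : x * x = 0 := by
    rw [← Nat.cast_mul, ZMod.natCast_eq_zero_iff]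
    exact ⟨r, by ring⟩
  have hmul_ne_zero : ∀ c < p, c ≠ 0 → (c : ZMod (p ^ 2 * r)) * x ≠ 0 := by
    intro c hcp hc
    rw [← Nat.cast_mul, Ne, ZMod.natCast_eq_zero_iff, show p ^ 2 * r = p * r * p by ring,
      show c * (p * r) = p * r * c by ring, Nat.mul_dvd_mul_iff_left (by positivity)]
    exact fun h => absurd (Nat.le_of_dvd (Nat.pos_of_ne_zero hc) h) (by omega)
  have hx : x ≠ 0 := by simpa using hmul_ne_zero 1 (by omega) one_ne_zero
  have hK2 : K x 2 = -1 := by simp [K, hxx]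
  have hK3 : K x 3 = -(2 * x) := by rw [K_add_two, hK2]; simp only [K]; ring
  refine not_monomiallyIrreducible_of_K_eq_one_or_neg_one hx 1 (Or.inr hK2) fun j hj => ?_
  interval_cases j
  · simp [K]
  · exact hx
  · simp [hK2]
  · simpa [hK3] using hmul_ne_zero 2 (by omega) two_ne_zero

theorem not_monomiallyIrreducible_of_coprime {p m : ℕ} (hpm : p.Coprime m) (hm : 2 ≤ m)
    (s : ZMod p) (hs13 : K s 13 = 1) (hs : ∀ j ≤ 14, j % 3 = 2 → K s j ≠ 0) :
    ¬ MonomiallyIrreducible (p * m) := by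
  have hp : p ≠ 0 := by rintro rfl; rw [Nat.coprime_zero_left] at hpm; omega
  have : NeZero (p * m) := ⟨by positivity⟩
  have : Fact (1 < m) := ⟨hm⟩
  let e := ZMod.chineseRemainder hpm
  set x := e.symm (s, 1)
  have hK : ∀ n, e (K x n) = (K s n, K 1 n) := fun n => by
    have hfst := map_K ((RingHom.fst _ _).comp e.toRingHom) x n
    have hsnd := map_K ((RingHom.snd _ _).comp e.toRingHom) x n
    simp only [RingHom.comp_apply, RingEquiv.toRingHom_eq_coe, RingEquiv.coe_toRingHom,
      RingHom.coe_fst, RingHom.coe_snd, x, RingEquiv.apply_symm_apply] at hfst hsnd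
    exact Prod.ext hfst hsnd
  have hx : x ≠ 0 := fun h => by simpa [x] using congrArg (fun y => (e y).2) h
  refine not_monomiallyIrreducible_of_K_eq_one_or_neg_one hx 12 (Or.inl (e.injective ?_))
    fun j hj h0 => ?_
  · rw [hK, hs13, K_one_three_mul_add 4 1, map_one]; norm_num [K]
  · have h := hK j
    rw [h0, map_zero, eq_comm, Prod.mk_eq_zero] at h
    by_cases hj3 : j % 3 = 2
    · exact hs j hj hj3 h.1
    · exact K_one_ne_zero hj3 h.2

lemma exists_K_witness {p : ℕ} (h : p ∈ ({53, 157, 443, 467, 677} : Set ℕ)) :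
    ∃ s : ZMod p, K s 13 = 1 ∧ ∀ j ≤ 14, j % 3 = 2 → K s j ≠ 0 := by
  simp only [Set.mem_insert_iff, Set.mem_singleton_iff] at h
  rcases h with rfl | rfl | rfl | rfl | rfl
  exacts [⟨8, by decide⟩, ⟨35, by decide⟩, ⟨11, by decide⟩, ⟨21, by decide⟩, ⟨124, by decide⟩]

end

theorem stmt11 (N p : ℕ) (hN : 2 ≤ N) (hnp : ¬ N.Prime) (hp : p.Prime)
    (hdvd : p ∣ N) (h : p ∈ ({53, 157, 443, 467, 677} : Set ℕ)) :
    ¬ MonomiallyIrreducible N := by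
  have : NeZero N := ⟨by omega⟩
  by_cases hsq : p ^ 2 ∣ N
  · have hp3 : 3 ≤ p := by simp only [Set.mem_insert_iff, Set.mem_singleton_iff] at h; omega
    exact not_monomiallyIrreducible_of_sq_dvd hp3 hsq
  obtain ⟨m, rfl⟩ := hdvd
  have hpm : p.Coprime m :=
    hp.coprime_iff_not_dvd.2 fun hpm => hsq (by rw [pow_two]; exact Nat.mul_dvd_mul_left p hpm)
  have hm : 2 ≤ m := by
    have : m ≠ 0 := by rintro rfl; simp at hN
    have : m ≠ 1 := by rintro rfl; exact hnp (by simpa using hp)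
    omega
  obtain ⟨s, hs13, hs⟩ := exists_K_witness h
  exact not_monomiallyIrreducible_of_coprime hpm hm s hs13 hs

end Monomial
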